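/- Let G=(V,E) be a finite connected graph with m edges, let w_{0,e}>0 be initial weights, fix θ>1 and a step size s with 0<s<1/2. Define iterates by w_e^{(0)}=w_{0,e} and w_e^{(j+1)} = ρ_e^{(j)} − s·κ_e^{(j)}·ρ_e^{(j)}, where ρ_e^{(j)} and κ_e^{(j)} denote the distance and Lin–Lu–Yau's Ricci curvature of the edge e computed from the weights w^{(j)} (the defining limits are assumed to exist at every step, and the curvature satisfies −(2/ρ_e)·max_{τ∈E} w_τ ≤ κ_e ≤ 2), and assume that at every step j and every edge e the θ-surgery condition w_e^{(j)}/ρ_e^{(j)} ≤ θ holds. Then every iterate is strictly positive (so the flow has a unique global solution) and for all j∈ℕ and all e∈E: (1−2s)^j·θ^{−j}·w_{0,e} ≤ w_e^{(j)} ≤ (1+2ms)^j·∑_{τ∈E} w_{0,τ}. -/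

import Mathlib

open Finset

section RicciDefs

variable {V : Type*}

/-- The sum of the weights of the edges of a walk. -/
noncomputable def walkWeight {G : SimpleGraph V} (w : Sym2 V → ℝ) {u v : V} (p : G.Walk u v) : ℝ :=
  (p.edges.map w).sum

/-- The weighted graph distance: infimum of total weight over walks joining `u` and `v`. -/
noncomputable def gdist (G : SimpleGraph V) (w : Sym2 V → ℝ) (u v : V) : ℝ :=
  sInf {x : ℝ | ∃ p : G.Walk u v, x = walkWeight w p}

/-- A choice of ordered endpoints of an unordered pair. -/
noncomputable def endpoints (e : Sym2 V) : V × V := Quot.out e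

/-- The weighted distance between the endpoints of an edge. -/
noncomputable def edist (G : SimpleGraph V) (w : Sym2 V → ℝ) (e : Sym2 V) : ℝ :=
  gdist G w (endpoints e).1 (endpoints e).2

/-- The `α`-lazy one-step random walk at `x`. -/
noncomputable def lazyWalk (G : SimpleGraph V) [Fintype V] [DecidableEq V] [DecidableRel G.Adj]
    (w : Sym2 V → ℝ) (α : ℝ) (x : V) : V → ℝ := fun z =>
  if z = x then α
  else if G.Adj x z then (1 - α) * w s(x, z) / ∑ u ∈ G.neighborFinset x, w s(x, u)
  else 0

/-- A probability measure on a finite vertex set. -/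
def IsProbMeasure [Fintype V] (μ : V → ℝ) : Prop :=
  (∀ x, 0 ≤ μ x) ∧ ∑ x, μ x = 1

/-- A coupling between two probability measures. -/
def IsCoupling [Fintype V] (μ₁ μ₂ : V → ℝ) (A : V → V → ℝ) : Prop :=
  (∀ u v, A u v ∈ Set.Icc (0 : ℝ) 1) ∧ (∀ u, ∑ x, A u x = μ₁ u) ∧ (∀ v, ∑ y, A y v = μ₂ v)

/-- The Wasserstein distance between two probability measures. -/
noncomputable def wasserstein [Fintype V] (G : SimpleGraph V) (w : Sym2 V → ℝ)
    (μ₁ μ₂ : V → ℝ) : ℝ :=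
  sInf {x : ℝ | ∃ A : V → V → ℝ, IsCoupling μ₁ μ₂ A ∧ x = ∑ u, ∑ v, A u v * gdist G w u v}

/-- Ollivier's `α`-Ricci curvature of an edge. -/
noncomputable def ollivier [Fintype V] [DecidableEq V] (G : SimpleGraph V) [DecidableRel G.Adj]
    (w : Sym2 V → ℝ) (α : ℝ) (e : Sym2 V) : ℝ :=
  1 - wasserstein G w (lazyWalk G w α (endpoints e).1) (lazyWalk G w α (endpoints e).2)
        / edist G w e

end RicciDefs

section Helpers


variable {V : Type*}

lemma walkWeight_nonneg {G : SimpleGraph V} {w : Sym2 V → ℝ}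
    (hw : ∀ e ∈ G.edgeSet, 0 ≤ w e) {u v : V} (p : G.Walk u v) : 0 ≤ walkWeight w p := by
  unfold walkWeight
  apply List.sum_nonneg
  intro x hx
  simp only [List.mem_map] at hx
  obtain ⟨e, he, rfl⟩ := hx
  exact hw e (p.edges_subset_edgeSet he)

lemma walkWeight_ge {G : SimpleGraph V} {w : Sym2 V → ℝ} {c : ℝ} (hc : 0 ≤ c)
    (hw : ∀ e ∈ G.edgeSet, c ≤ w e) {u v : V} (hne : u ≠ v) (p : G.Walk u v) :
    c ≤ walkWeight w p := by
  cases p with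
  | nil => exact absurd rfl hne
  | @cons _ b _ h q =>
    have h2 : 0 ≤ walkWeight w q := walkWeight_nonneg (fun e he => le_trans hc (hw e he)) q
    have h1 : c ≤ w s(u, b) := hw _ h
    unfold walkWeight at *
    simp only [SimpleGraph.Walk.edges_cons, List.map_cons, List.sum_cons]
    linarith

lemma endpoints_mk {e : Sym2 V} : s((endpoints e).1, (endpoints e).2) = e := by
  unfold endpoints
  show Quot.mk _ (Quot.out e) = e
  exact Quot.out_eq e

lemma edist_pos_le [Fintype V] [DecidableEq V] (G : SimpleGraph V) [DecidableRel G.Adj]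
    (w : Sym2 V → ℝ) (hw : ∀ e ∈ G.edgeFinset, 0 < w e)
    {e : Sym2 V} (he : e ∈ G.edgeFinset) :
    0 < edist G w e ∧ edist G w e ≤ w e := by
  set x := (endpoints e).1
  set y := (endpoints e).2
  have hxy : G.Adj x y := by
    rw [← SimpleGraph.mem_edgeSet, endpoints_mk]
    exact SimpleGraph.mem_edgeFinset.mp he
  have hne : x ≠ y := hxy.ne
  set c := G.edgeFinset.inf' ⟨e, he⟩ w with hc
  have hcpos : 0 < c := by
    rw [hc]; refine (Finset.lt_inf'_iff ..).mpr ?_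
    exact fun b hb => hw b hb
  have hcle : ∀ τ ∈ G.edgeSet, c ≤ w τ := fun τ hτ =>
    Finset.inf'_le w (SimpleGraph.mem_edgeFinset.mpr hτ)
  have hlb : ∀ z ∈ {x_1 : ℝ | ∃ p : G.Walk x y, x_1 = walkWeight w p}, c ≤ z := by
    rintro z ⟨p, rfl⟩
    exact walkWeight_ge hcpos.le hcle hne p
  have hub : edist G w e ≤ w e := by
    have hp : walkWeight w (SimpleGraph.Walk.cons hxy SimpleGraph.Walk.nil) = w e := by
      unfold walkWeight
      simp only [SimpleGraph.Walk.edges_cons, SimpleGraph.Walk.edges_nil, List.map_cons,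
        List.map_nil, List.sum_cons, List.sum_nil, add_zero]
      rw [show s(x, y) = e from endpoints_mk]
    calc edist G w e ≤ walkWeight w (SimpleGraph.Walk.cons hxy SimpleGraph.Walk.nil) := by
          apply csInf_le ⟨c, hlb⟩
          exact ⟨_, rfl⟩
      _ = w e := hp
  have hlo : c ≤ edist G w e :=
    le_csInf ⟨walkWeight w (SimpleGraph.Walk.cons hxy SimpleGraph.Walk.nil),
      SimpleGraph.Walk.cons hxy SimpleGraph.Walk.nil, rfl⟩ hlb
  exact ⟨lt_of_lt_of_le hcpos hlo, hub⟩

end Helpers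

/-- Theorem 2.5 (ii): bounds for the discrete Ricci curvature flow
`w' = ρ − s·κ·ρ` with Lin–Lu–Yau's curvature, under the θ-surgery condition. -/
theorem lly_rho_flow_surgery_bounds {V : Type*} [Fintype V] [DecidableEq V]
    (G : SimpleGraph V) [DecidableRel G.Adj] (hconn : G.Connected)
    (m : ℕ) (hm : G.edgeFinset.card = m)
    (θ : ℝ) (hθ : 1 < θ)
    (s : ℝ) (hs0 : 0 < s) (hs1 : s < 1 / 2)
    (w : ℕ → Sym2 V → ℝ) (κ : ℕ → Sym2 V → ℝ)
    (hpos0 : ∀ e ∈ G.edgeFinset, 0 < w 0 e)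
    -- the Lin–Lu–Yau curvature κ is the limit of κ^α/(1-α) as α → 1⁻, assumed to exist
    (hLLY : ∀ j : ℕ, ∀ e ∈ G.edgeFinset,
      Filter.Tendsto (fun α : ℝ => ollivier G (w j) α e / (1 - α))
        (nhdsWithin 1 (Set.Iio 1)) (nhds (κ j e)))
    -- the curvature bounds −(2/ρ_e)·max_{τ∈E} w_τ ≤ κ_e ≤ 2
    (hbound : ∀ (j : ℕ) (e : Sym2 V) (he : e ∈ G.edgeFinset),
      -(2 / edist G (w j) e) * G.edgeFinset.sup' ⟨e, he⟩ (w j) ≤ κ j e ∧ κ j e ≤ 2)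
    (hflow : ∀ j : ℕ, ∀ e ∈ G.edgeFinset,
      w (j + 1) e = edist G (w j) e - s * κ j e * edist G (w j) e)
    -- θ-surgery condition at every step
    (hsurg : ∀ j : ℕ, ∀ e ∈ G.edgeFinset, w j e / edist G (w j) e ≤ θ) :
    ∀ j : ℕ, ∀ e ∈ G.edgeFinset,
      0 < w j e ∧
      (1 - 2 * s) ^ j * θ ^ (-(j : ℤ)) * w 0 e ≤ w j e ∧
      w j e ≤ (1 + 2 * (m : ℝ) * s) ^ j * ∑ τ ∈ G.edgeFinset, w 0 τ := by
  have hθ0 : (0:ℝ) < θ := lt_trans one_pos hθ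
  have hs2 : (0:ℝ) < 1 - 2*s := by linarith
  have key : ∀ j : ℕ,
      (∀ e ∈ G.edgeFinset, 0 < w j e ∧ (1 - 2*s)^j * θ^(-(j:ℤ)) * w 0 e ≤ w j e)
      ∧ ∑ τ ∈ G.edgeFinset, w j τ ≤ (1 + 2*(m:ℝ)*s)^j * ∑ τ ∈ G.edgeFinset, w 0 τ := by
    intro j
    induction j with
    | zero =>
      refine ⟨fun e he => ⟨hpos0 e he, by simp⟩, by simp⟩
    | succ j ih =>
      obtain ⟨ihe, ihsum⟩ := ih
      have hposj : ∀ e ∈ G.edgeFinset, 0 < w j e := fun e he => (ihe e he).1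
      have hstep : ∀ e ∈ G.edgeFinset,
          (1-2*s) * (w j e / θ) ≤ w (j+1) e ∧
          w (j+1) e ≤ w j e + 2*s*(∑ τ ∈ G.edgeFinset, w j τ) := by
        intro e he
        obtain ⟨hρpos, hρle⟩ := edist_pos_le G (w j) hposj he
        obtain ⟨hκlo, hκhi⟩ := hbound j e he
        have hw1 : w (j+1) e = edist G (w j) e - s * κ j e * edist G (w j) e := hflow j e he
        set ρ := edist G (w j) e with hρdef
        set M := G.edgeFinset.sup' ⟨e, he⟩ (w j) with hMdef
        have hMs : M ≤ ∑ τ ∈ G.edgeFinset, w j τ := by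
          apply Finset.sup'_le
          intro b hb
          exact Finset.single_le_sum (fun τ hτ => (hposj τ hτ).le) hb
        have hM0 : 0 ≤ M := le_trans (hposj e he).le (Finset.le_sup' (w j) he)
        constructor
        · have hsurge : w j e ≤ θ * ρ := by
            have h := hsurg j e he
            rw [div_le_iff₀ hρpos] at h
            linarith
          have h1 : w j e / θ ≤ ρ := by rw [div_le_iff₀ hθ0]; linarith
          have h2 : (1-2*s) * ρ ≤ ρ - s * κ j e * ρ := by
            nlinarith [mul_nonneg (mul_nonneg hs0.le hρpos.le) (sub_nonneg.mpr hκhi)]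
          rw [hw1]
          calc (1-2*s) * (w j e / θ) ≤ (1-2*s) * ρ :=
                mul_le_mul_of_nonneg_left h1 hs2.le
            _ ≤ _ := h2
        · have h3 : (-(2 / ρ) * M) * ρ ≤ κ j e * ρ :=
            mul_le_mul_of_nonneg_right hκlo hρpos.le
          have h4 : (-(2 / ρ) * M) * ρ = -(2 * M) := by
            field_simp
          rw [h4] at h3
          rw [hw1]
          nlinarith [mul_le_mul_of_nonneg_left h3 hs0.le]
      refine ⟨?_, ?_⟩
      · intro e he
        obtain ⟨hl, _⟩ := hstep e he
        have hwpos : 0 < w (j+1) e :=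
          lt_of_lt_of_le (mul_pos hs2 (div_pos (hposj e he) hθ0)) hl
        refine ⟨hwpos, ?_⟩
        have hzp : θ ^ (-((j:ℕ)+1 : ℕ) : ℤ) = θ ^ (-(j:ℤ)) * θ⁻¹ := by
          have h5 : (-((j:ℕ)+1 : ℕ) : ℤ) = (-(j:ℤ)) + (-1) := by push_cast; ring
          rw [h5, zpow_add₀ (ne_of_gt hθ0), zpow_neg_one]
        have hib := (ihe e he).2
        have hθinv : (0:ℝ) < θ⁻¹ := inv_pos.mpr hθ0
        calc (1-2*s)^(j+1) * θ ^ (-((j:ℕ)+1 : ℕ) : ℤ) * w 0 e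
            = (1-2*s) * ((1-2*s)^j * θ^(-(j:ℤ)) * w 0 e) * θ⁻¹ := by
              rw [pow_succ, hzp]; ring
          _ ≤ (1-2*s) * (w j e) * θ⁻¹ :=
              mul_le_mul_of_nonneg_right (mul_le_mul_of_nonneg_left hib hs2.le) hθinv.le
          _ = (1-2*s) * (w j e / θ) := by rw [div_eq_mul_inv]; ring
          _ ≤ w (j+1) e := hl
      · calc ∑ τ ∈ G.edgeFinset, w (j+1) τ
            ≤ ∑ τ ∈ G.edgeFinset, (w j τ + 2*s*(∑ σ ∈ G.edgeFinset, w j σ)) :=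
              Finset.sum_le_sum fun τ hτ => (hstep τ hτ).2
          _ = (∑ τ ∈ G.edgeFinset, w j τ) + (m:ℝ) * (2*s*(∑ σ ∈ G.edgeFinset, w j σ)) := by
              rw [Finset.sum_add_distrib, Finset.sum_const, hm, nsmul_eq_mul]
          _ = (1 + 2*(m:ℝ)*s) * (∑ τ ∈ G.edgeFinset, w j τ) := by ring
          _ ≤ (1 + 2*(m:ℝ)*s) * ((1 + 2*(m:ℝ)*s)^j * ∑ τ ∈ G.edgeFinset, w 0 τ) :=
              mul_le_mul_of_nonneg_left ihsum (by positivity)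
          _ = (1 + 2*(m:ℝ)*s)^(j+1) * ∑ τ ∈ G.edgeFinset, w 0 τ := by
              rw [pow_succ]; ring
  intro j e he
  obtain ⟨he1, hsum⟩ := key j
  obtain ⟨hp, hlow⟩ := he1 e he
  exact ⟨hp, hlow,
    le_trans (Finset.single_le_sum (fun τ hτ => (he1 τ hτ).1.le) he) hsum⟩
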